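/- Szegő's estimate: for x > 1, E_l(lx) = (1/√(2πl)) (ex)^l · x/(x−1) · (1 + ε_l(x)), where ε_l(x) → 0 as l → ∞ uniformly for x in compact subsets of (1,∞). Consequently, if k/m → β and n/m → τ with r² < β < τ < |z₀|², then E_{k−1}(m|z₀|²)/E_{n−1}(m|z₀|²) → 0 exponentially fast as m → ∞. -/

import Mathlib

/-!
Reversing the order of summation gives `E_l(lx) = (lx)^l / l! · T_l(x)` with
`T_l(x) = ∑_{i ≤ l} (l)_i / l^i · x⁻ⁱ`, and Stirling's formula turns `(lx)^l / l!` into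
`(ex)^l / √(2πl)` up to a factor tending to `1`. The defect
`x / (x - 1) - T_l(x) = ∑_i (1 - (l)_i / l^i) x⁻ⁱ` has nonnegative terms, so it decreases in `x`
and tends to `0` by dominated convergence (Tannery); its value at `min K` bounds the error
uniformly on `K`.

For the ratio, `x^i / i! ≤ ((i + d) / x)^d · x^(i+d) / (i + d)!` moves each term of `E_{k-1}(x)`
by `d = n - k` onto a term of `E_{n-1}(x)`, so `E_{k-1}(x) / E_{n-1}(x) ≤ (n / x)^(n-k)`.
With `x = m|z₀|²`, eventually `n / x ≤ ρ < 1` and `n - k ≥ γ m`, so the ratio is at most `(ρ^γ)^m`.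
-/

open MeasureTheory Metric Complex Filter

noncomputable def ER (k : ℤ) (x : ℝ) : ℝ :=
  ∑ j ∈ Finset.range (k + 1).toNat, x ^ j / (Nat.factorial j)

open Finset Topology Set Asymptotics
open scoped Nat Real

lemma ER_natCast (l : ℕ) (x : ℝ) : ER l x = ∑ j ∈ range (l + 1), x ^ j / j ! := by
  rw [ER, ← Nat.cast_succ, Int.toNat_natCast]

lemma ER_natCast_sub_one (k : ℕ) (x : ℝ) :
    ER ((k : ℤ) - 1) x = ∑ j ∈ range k, x ^ j / j ! := by
  rw [ER, sub_add_cancel, Int.toNat_natCast]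

lemma sum_range_pow_div_factorial_eq_mul_sum_descFactorial (l : ℕ) {y : ℝ} (hy : y ≠ 0) :
    ∑ j ∈ range (l + 1), y ^ j / j ! =
      y ^ l / l ! * ∑ i ∈ range (l + 1), (l.descFactorial i : ℝ) / y ^ i := by
  rw [mul_sum, ← sum_range_reflect]
  refine sum_congr rfl fun i hi => ?_
  have hil : i ≤ l := Nat.lt_succ_iff.1 (mem_range.1 hi)
  have hfac : ((l - i)! : ℝ) * l.descFactorial i = l ! :=
    mod_cast Nat.factorial_mul_descFactorial hil
  have hpow : y ^ (l - i) * y ^ i = y ^ l := by rw [← pow_add, Nat.sub_add_cancel hil]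
  rw [Nat.add_sub_cancel, ← hfac, ← hpow]
  have hdesc : (l.descFactorial i : ℝ) ≠ 0 := mod_cast (Nat.descFactorial_pos.2 hil).ne'
  field_simp

noncomputable def szegoSum (l : ℕ) (x : ℝ) : ℝ :=
  ∑ i ∈ range (l + 1), (l.descFactorial i / l ^ i : ℝ) * x⁻¹ ^ i

lemma ER_natCast_mul (l : ℕ) {x : ℝ} (hl : l ≠ 0) (hx : x ≠ 0) :
    ER l (l * x) = (l * x) ^ l / l ! * szegoSum l x := by
  rw [ER_natCast, sum_range_pow_div_factorial_eq_mul_sum_descFactorial l (by positivity), szegoSum]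
  congr 1
  refine sum_congr rfl fun i _ => ?_
  ring

lemma natCast_mul_pow_div_factorial {l : ℕ} (hl : l ≠ 0) (x : ℝ) :
    (l * x) ^ l / l ! =
      1 / √(2 * π * l) * (Real.exp 1 * x) ^ l * (√π / Stirling.stirlingSeq l) := by
  have hsqrt : √(2 * π * l) = √(2 * l) * √π := by
    rw [← Real.sqrt_mul (by positivity), mul_right_comm]
  rw [Stirling.stirlingSeq, hsqrt]
  have hl' : (0 : ℝ) < l := by positivity
  have he : 0 < Real.exp 1 := Real.exp_pos 1
  field_simp
  rw [← mul_pow]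
  field_simp

noncomputable def szegoRemainder (l : ℕ) (x : ℝ) : ℝ :=
  √π / Stirling.stirlingSeq l * (szegoSum l x * ((x - 1) / x)) - 1

lemma ER_natCast_mul_eq_szego {l : ℕ} (hl : 1 ≤ l) {x : ℝ} (hx : 1 < x) :
    ER l (l * x) = 1 / √(2 * π * l) * (Real.exp 1 * x) ^ l * (x / (x - 1)) *
      (1 + szegoRemainder l x) := by
  have hl0 : l ≠ 0 := by omega
  have hx1 : x - 1 ≠ 0 := sub_ne_zero.2 hx.ne'
  rw [ER_natCast_mul l hl0 (by positivity), natCast_mul_pow_div_factorial hl0, szegoRemainder]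
  field_simp
  ring

lemma descFactorial_div_pow_le_one (l i : ℕ) : (l.descFactorial i / l ^ i : ℝ) ≤ 1 :=
  div_le_one_of_le₀ (mod_cast Nat.descFactorial_le_pow l i) (by positivity)

lemma tendsto_descFactorial_div_pow (i : ℕ) :
    Tendsto (fun l : ℕ => (l.descFactorial i / l ^ i : ℝ)) atTop (𝓝 1) := by
  have hne : ∀ᶠ l : ℕ in atTop, (l ^ i : ℝ) ≠ 0 :=
    (eventually_ne_atTop 0).mono fun l hl => by positivity
  exact (isEquivalent_iff_tendsto_one hne).1 (isEquivalent_descFactorial i)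

noncomputable def szegoDefect (l : ℕ) (x : ℝ) : ℝ :=
  ∑' i : ℕ, (1 - l.descFactorial i / l ^ i : ℝ) * x⁻¹ ^ i

lemma szegoDefect_term_nonneg (l i : ℕ) {x : ℝ} (hx : 0 ≤ x) :
    0 ≤ (1 - l.descFactorial i / l ^ i : ℝ) * x⁻¹ ^ i :=
  mul_nonneg (sub_nonneg.2 (descFactorial_div_pow_le_one l i)) (by positivity)

lemma szegoDefect_term_le (l i : ℕ) {x : ℝ} (hx : 0 ≤ x) :
    (1 - l.descFactorial i / l ^ i : ℝ) * x⁻¹ ^ i ≤ x⁻¹ ^ i :=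
  mul_le_of_le_one_left (by positivity) (by simp only [sub_le_self_iff]; positivity)

lemma summable_szegoDefect (l : ℕ) {x : ℝ} (hx : 1 < x) :
    Summable fun i : ℕ => (1 - l.descFactorial i / l ^ i : ℝ) * x⁻¹ ^ i :=
  (summable_geometric_of_lt_one (by positivity) (inv_lt_one_of_one_lt₀ hx)).of_nonneg_of_le
    (fun i => szegoDefect_term_nonneg l i (by positivity))
    (fun i => szegoDefect_term_le l i (by positivity))

lemma szegoSum_add_szegoDefect (l : ℕ) {x : ℝ} (hx : 1 < x) :
    szegoSum l x + szegoDefect l x = x / (x - 1) := by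
  have hq0 : (0 : ℝ) ≤ x⁻¹ := by positivity
  have hq1 : x⁻¹ < 1 := inv_lt_one_of_one_lt₀ hx
  have hsum : szegoSum l x = ∑' i : ℕ, (l.descFactorial i / l ^ i : ℝ) * x⁻¹ ^ i := by
    refine (tsum_eq_sum fun i hi => ?_).symm
    rw [Finset.mem_range, not_lt] at hi
    rw [Nat.descFactorial_eq_zero_iff_lt.2 (by omega)]
    simp
  have hgeom : x / (x - 1) = ∑' i : ℕ, x⁻¹ ^ i := by
    rw [tsum_geometric_of_lt_one hq0 hq1]
    have : x - 1 ≠ 0 := sub_ne_zero.2 hx.ne'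
    field_simp
  rw [hgeom, hsum, szegoDefect, ← Summable.tsum_add]
  · exact tsum_congr fun i => by ring
  · exact (summable_geometric_of_lt_one hq0 hq1).of_nonneg_of_le (fun i => by positivity)
      (fun i => mul_le_of_le_one_left (by positivity) (descFactorial_div_pow_le_one l i))
  · exact summable_szegoDefect l hx

lemma szegoDefect_nonneg (l : ℕ) {x : ℝ} (hx : 0 ≤ x) : 0 ≤ szegoDefect l x :=
  tsum_nonneg fun i => szegoDefect_term_nonneg l i hx

lemma szegoDefect_antitoneOn (l : ℕ) : AntitoneOn (szegoDefect l) (Ioi 1) := by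
  intro a ha x hx hax
  refine Summable.tsum_le_tsum (fun i => ?_) (summable_szegoDefect l hx) (summable_szegoDefect l ha)
  have ha0 : (0 : ℝ) < a := zero_lt_one.trans ha
  have hx0 : (0 : ℝ) < x := zero_lt_one.trans hx
  gcongr
  exact sub_nonneg.2 (descFactorial_div_pow_le_one l i)

lemma tendsto_szegoDefect {x : ℝ} (hx : 1 < x) :
    Tendsto (fun l => szegoDefect l x) atTop (𝓝 0) := by
  have hx0 : (0 : ℝ) ≤ x := zero_le_one.trans hx.le
  have h := tendsto_tsum_of_dominated_convergence (𝓕 := atTop)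
    (summable_geometric_of_lt_one (by positivity) (inv_lt_one_of_one_lt₀ hx))
    (fun i => ((tendsto_descFactorial_div_pow i).const_sub 1).mul_const (x⁻¹ ^ i))
    (Eventually.of_forall fun l i => by
      rw [Real.norm_of_nonneg (szegoDefect_term_nonneg l i hx0)]
      exact szegoDefect_term_le l i hx0)
  simp only [sub_self, zero_mul, tsum_zero] at h
  exact h

lemma tendstoUniformlyOn_zero_of_norm_le {ι κ E : Type*} [SeminormedAddGroup E] {f : ι → κ → E}
    {s : Set κ} {p : Filter ι} {b : ι → ℝ} (hb : Tendsto b p (𝓝 0))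
    (hfb : ∀ᶠ i in p, ∀ x ∈ s, ‖f i x‖ ≤ b i) : TendstoUniformlyOn f 0 p s :=
  SeminormedAddGroup.tendstoUniformlyOn_zero.2 fun _ hε =>
    (hfb.and (hb.eventually (gt_mem_nhds hε))).mono fun _ hi x hx => (hi.1 x hx).trans_lt hi.2

lemma abs_szegoRemainder_le {l : ℕ} {a x : ℝ} (ha : 1 < a) (hax : a ≤ x) :
    |szegoRemainder l x| ≤ |√π / Stirling.stirlingSeq l - 1| + szegoDefect l a := by
  have hx : 1 < x := ha.trans_le hax
  have hx0 : 0 < x := zero_lt_one.trans hx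
  have hw0 : 0 ≤ (x - 1) / x := div_nonneg (sub_nonneg.2 hx.le) hx0.le
  have hw1 : (x - 1) / x ≤ 1 := (div_le_one hx0).2 (by linarith)
  have hdefect : 1 - szegoSum l x * ((x - 1) / x) = szegoDefect l x * ((x - 1) / x) := by
    have hx1 : x - 1 ≠ 0 := sub_ne_zero.2 hx.ne'
    rw [eq_sub_of_add_eq' (szegoSum_add_szegoDefect l hx)]
    field_simp
  set g := szegoSum l x * ((x - 1) / x)
  have hg0 : 0 ≤ g := mul_nonneg (sum_nonneg fun i _ => by positivity) hw0
  have hgap0 : 0 ≤ 1 - g := hdefect ▸ mul_nonneg (szegoDefect_nonneg l hx0.le) hw0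
  have hgap : 1 - g ≤ szegoDefect l a :=
    calc 1 - g ≤ szegoDefect l x :=
          hdefect ▸ mul_le_of_le_one_right (szegoDefect_nonneg l hx0.le) hw1
      _ ≤ szegoDefect l a := szegoDefect_antitoneOn l ha hx hax
  set A := √π / Stirling.stirlingSeq l
  calc |szegoRemainder l x| = |(A - 1) * g - (1 - g)| := by
        change |A * g - 1| = _
        ring_nf
    _ ≤ |(A - 1) * g| + |1 - g| := abs_sub _ _
    _ = |A - 1| * g + (1 - g) := by rw [abs_mul, abs_of_nonneg hg0, abs_of_nonneg hgap0]
    _ ≤ |A - 1| * 1 + szegoDefect l a := by gcongr; linarith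
    _ = |A - 1| + szegoDefect l a := by rw [mul_one]

lemma tendstoUniformlyOn_szegoRemainder_Ici {a : ℝ} (ha : 1 < a) :
    TendstoUniformlyOn szegoRemainder 0 atTop (Ici a) := by
  have hA : Tendsto (fun l => √π / Stirling.stirlingSeq l) atTop (𝓝 1) := by
    have hπ : √π ≠ 0 := (Real.sqrt_pos.2 Real.pi_pos).ne'
    have h := (tendsto_const_nhds (x := √π)).div Stirling.tendsto_stirlingSeq_sqrt_pi hπ
    rwa [div_self hπ] at h
  have hb : Tendsto (fun l => |√π / Stirling.stirlingSeq l - 1| + szegoDefect l a) atTop (𝓝 0) := by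
    simpa using ((hA.sub_const 1).abs).add (tendsto_szegoDefect ha)
  exact tendstoUniformlyOn_zero_of_norm_le hb
    (Eventually.of_forall fun l x hx => abs_szegoRemainder_le ha hx)

lemma tendstoUniformlyOn_szegoRemainder {K : Set ℝ} (hK : IsCompact K) (hK1 : K ⊆ Ioi 1) :
    TendstoUniformlyOn szegoRemainder 0 atTop K := by
  obtain ⟨a, ha, hKa⟩ : ∃ a, 1 < a ∧ K ⊆ Ici a := by
    rcases K.eq_empty_or_nonempty with rfl | hne
    · exact ⟨2, one_lt_two, empty_subset _⟩
    · obtain ⟨a, haK, hmin⟩ := hK.exists_isLeast hne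
      exact ⟨a, hK1 haK, fun x hx => hmin hx⟩
  exact (tendstoUniformlyOn_szegoRemainder_Ici ha).mono hKa

lemma factorial_add_le_factorial_mul_pow (i d : ℕ) : (i + d)! ≤ i ! * (i + d) ^ d := by
  calc (i + d)! = i ! * (i + d).descFactorial d := by
        rw [← Nat.factorial_mul_descFactorial (Nat.le_add_left d i), Nat.add_sub_cancel]
    _ ≤ i ! * (i + d) ^ d := Nat.mul_le_mul_left _ (Nat.descFactorial_le_pow _ _)

lemma pow_div_factorial_le {x : ℝ} (hx : 0 < x) (i d : ℕ) :
    x ^ i / i ! ≤ ((i + d) / x) ^ d * (x ^ (i + d) / (i + d)!) := by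
  have hfac : ((i + d)! : ℝ) ≤ i ! * (i + d) ^ d := mod_cast factorial_add_le_factorial_mul_pow i d
  have hrhs : ((i + d) / x) ^ d * (x ^ (i + d) / (i + d)!) = x ^ i * (i + d) ^ d / (i + d)! := by
    rw [div_pow, pow_add]
    field_simp
  rw [hrhs, div_le_div_iff₀ (by positivity) (by positivity), mul_assoc]
  exact mul_le_mul_of_nonneg_left (by rwa [mul_comm]) (by positivity)

lemma sum_range_pow_div_factorial_le {k n : ℕ} (hkn : k ≤ n) {x ρ : ℝ} (hx : 0 < x)
    (hn : n ≤ ρ * x) :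
    ∑ i ∈ range k, x ^ i / i ! ≤ ρ ^ (n - k) * ∑ i ∈ range n, x ^ i / i ! := by
  have hρ : 0 ≤ ρ := nonneg_of_mul_nonneg_left ((Nat.cast_nonneg n).trans hn) hx
  calc ∑ i ∈ range k, x ^ i / i !
      ≤ ∑ i ∈ range k, ρ ^ (n - k) * (x ^ (i + (n - k)) / (i + (n - k))!) := by
        refine sum_le_sum fun i hi => (pow_div_factorial_le hx i (n - k)).trans ?_
        have hik := mem_range.1 hi
        have hin : ((i + (n - k) : ℕ) : ℝ) ≤ n := mod_cast (by omega : i + (n - k) ≤ n)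
        gcongr
        rw [div_le_iff₀ hx]
        exact_mod_cast hin.trans hn
    _ = ρ ^ (n - k) * ∑ i ∈ Ico (n - k) n, x ^ i / i ! := by
        rw [← mul_sum, sum_Ico_eq_sum_range, Nat.sub_sub_self hkn]
        simp only [add_comm]
    _ ≤ ρ ^ (n - k) * ∑ i ∈ range n, x ^ i / i ! := by
        gcongr
        exact range_eq_Ico n ▸ Ico_subset_Ico_left (Nat.zero_le _)

lemma ER_sub_one_div_le {k n : ℕ} (hkn : k ≤ n) {x ρ : ℝ} (hx : 0 < x) (hn : n ≤ ρ * x) :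
    ER ((k : ℤ) - 1) x / ER ((n : ℤ) - 1) x ≤ ρ ^ (n - k) := by
  have hρ : 0 ≤ ρ := nonneg_of_mul_nonneg_left ((Nat.cast_nonneg n).trans hn) hx
  rw [ER_natCast_sub_one, ER_natCast_sub_one]
  exact div_le_of_le_mul₀ (sum_nonneg fun i _ => by positivity) (pow_nonneg hρ _)
    (sum_range_pow_div_factorial_le hkn hx hn)

lemma eventually_ER_sub_one_div_le_rpow {K β τ : ℝ} (hτ : 0 < τ) (hβτ : β < τ) (hτK : τ < K)
    {m : ℕ → ℝ} {k n : ℕ → ℕ} (hm : ∀ j, 0 < m j)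
    (hk : Tendsto (fun j => (k j : ℝ) / m j) atTop (𝓝 β))
    (hn : Tendsto (fun j => (n j : ℝ) / m j) atTop (𝓝 τ)) :
    ∃ θ ∈ Ioo (0 : ℝ) 1, ∀ᶠ j in atTop,
      ER ((k j : ℤ) - 1) (m j * K) / ER ((n j : ℤ) - 1) (m j * K) ≤ θ ^ m j := by
  obtain ⟨σ, hτσ, hσK⟩ := exists_between hτK
  obtain ⟨γ, hγ, hγτβ⟩ := exists_between (sub_pos.2 hβτ)
  have hK : 0 < K := hτ.trans hτK
  set ρ := σ / K
  have hρ0 : 0 < ρ := div_pos (hτ.trans hτσ) hK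
  have hρ1 : ρ < 1 := (div_lt_one hK).2 hσK
  refine ⟨ρ ^ γ, ⟨Real.rpow_pos_of_pos hρ0 γ, Real.rpow_lt_one hρ0.le hρ1 hγ⟩, ?_⟩
  filter_upwards [(hn.sub hk).eventually_const_lt hγτβ,
    hn.eventually_lt_const hτσ] with j hgap hnσ
  have hmj := hm j
  rw [← sub_div, lt_div_iff₀ hmj] at hgap
  rw [div_lt_iff₀ hmj] at hnσ
  have hkn : k j ≤ n j := by
    have : (k j : ℝ) < n j := by nlinarith
    exact_mod_cast this.le
  have hnρ : (n j : ℝ) ≤ ρ * (m j * K) := by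
    rw [div_mul_eq_mul_div, mul_div_assoc, mul_div_cancel_right₀ _ hK.ne']
    nlinarith
  calc ER ((k j : ℤ) - 1) (m j * K) / ER ((n j : ℤ) - 1) (m j * K)
      ≤ ρ ^ (n j - k j) := ER_sub_one_div_le hkn (by positivity) hnρ
    _ = ρ ^ ((n j : ℝ) - k j) := by rw [← Nat.cast_sub hkn, Real.rpow_natCast]
    _ ≤ ρ ^ (γ * m j) := Real.rpow_le_rpow_of_exponent_ge hρ0 hρ1.le hgap.le
    _ = (ρ ^ γ) ^ m j := Real.rpow_mul hρ0.le γ (m j)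

/-- Szegő's estimate
`E_l(lx) = (1/√(2πl)) (ex)^l · x/(x−1) · (1 + ε_l(x))` with `ε_l → 0` uniformly on compact
subsets of `(1,∞)`; consequently if `k/m → β`, `n/m → τ` with `r² < β < τ < |z₀|²` and
`m → ∞`, then `E_{k−1}(m|z₀|²)/E_{n−1}(m|z₀|²) → 0` exponentially fast. -/
theorem szego_estimate_and_exponential_decay :
    (∃ εl : ℕ → ℝ → ℝ,
      (∀ l : ℕ, 1 ≤ l → ∀ x : ℝ, 1 < x →
        ER (l : ℤ) ((l : ℝ) * x) =
          (1 / Real.sqrt (2 * Real.pi * l)) * (Real.exp 1 * x) ^ l * (x / (x - 1)) *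
            (1 + εl l x)) ∧
      (∀ Kc : Set ℝ, IsCompact Kc → Kc ⊆ Set.Ioi 1 →
        TendstoUniformlyOn (fun l x => εl l x) 0 atTop Kc)) ∧
    (∀ (z₀ : ℂ) (r β τ : ℝ), 0 < r → r ^ 2 < β → β < τ → τ < ‖z₀‖ ^ 2 →
      ∀ (m : ℕ → ℝ) (k n : ℕ → ℕ),
        Tendsto m atTop atTop → (∀ j, 0 < m j) →
        Tendsto (fun j => (k j : ℝ) / m j) atTop (nhds β) →
        Tendsto (fun j => (n j : ℝ) / m j) atTop (nhds τ) →
        ∃ c > (0:ℝ), ∃ θ ∈ Set.Ioo (0:ℝ) 1, ∀ᶠ j in atTop,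
          ER ((k j : ℤ) - 1) (m j * ‖z₀‖ ^ 2) / ER ((n j : ℤ) - 1) (m j * ‖z₀‖ ^ 2) ≤
            c * θ ^ (m j)) := by
  refine ⟨⟨szegoRemainder, fun l hl x hx => ER_natCast_mul_eq_szego hl hx,
    fun K hK hK1 => tendstoUniformlyOn_szegoRemainder hK hK1⟩, ?_⟩
  intro z₀ r β τ _ hrβ hβτ hτz m k n _ hm hk hn
  obtain ⟨θ, hθ, hdecay⟩ := eventually_ER_sub_one_div_le_rpow
    ((sq_nonneg r).trans_lt (hrβ.trans hβτ)) hβτ hτz hm hk hn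
  exact ⟨1, one_pos, θ, hθ, by simpa only [one_mul] using hdecay⟩
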